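/- Let ψ, φ ∈ R^n be probability vectors with ψ strictly majorized by φ, and let χ ∈ R^k be a positive probability vector with l_u(χ) > g_u(φ). Then there exists δ > 0 such that for every probability vector ω ∈ R^k with ||ω^↓ - χ^↓|| < δ (Euclidean distance between the non-increasingly sorted versions), ψ ⊗ χ is majorized by φ ⊗ ω. -/

import Mathlib

open Finset

/-- `eSum v m` is the sum of the `m` largest entries of `v`
(the supremum of sums over subsets of cardinality `m`). -/
noncomputable def eSum {ι : Type} [Fintype ι] (v : ι → ℝ) (m : ℕ) : ℝ :=
  sSup {x | ∃ s : Finset ι, s.card = m ∧ x = ∑ i ∈ s, v i}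

/-- Majorization `x ≺ y`: partial sums of largest entries of `x` are dominated
by those of `y`, with equal total sums. -/
def Maj {ι κ : Type} [Fintype ι] [Fintype κ] (x : ι → ℝ) (y : κ → ℝ) : Prop :=
  (∀ m : ℕ, 1 ≤ m → m < Fintype.card ι → eSum x m ≤ eSum y m) ∧
    ∑ i, x i = ∑ j, y j

/-- Strict majorization `x ◁ y`: all inequalities strict, total sums equal. -/
def SMaj {ι κ : Type} [Fintype ι] [Fintype κ] (x : ι → ℝ) (y : κ → ℝ) : Prop :=
  (∀ m : ℕ, 1 ≤ m → m < Fintype.card ι → eSum x m < eSum y m) ∧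
    ∑ i, x i = ∑ j, y j

/-- Global uniformity: smallest entry divided by largest entry. -/
noncomputable def gu {ι : Type} [Fintype ι] (v : ι → ℝ) : ℝ :=
  sInf (Set.range v) / sSup (Set.range v)

/-- The set of ratios `v b / v a` over consecutive distinct values `v b < v a`
(no value strictly in between). -/
def ratioSet {ι : Type} [Fintype ι] (v : ι → ℝ) : Set ℝ :=
  {r | ∃ a b : ι, v b < v a ∧ (¬ ∃ c : ι, v b < v c ∧ v c < v a) ∧ r = v b / v a}

open Classical in
noncomputable def lu {ι : Type} [Fintype ι] (v : ι → ℝ) : ℝ :=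
  if (∃ a b : ι, v a ≠ v b) then sInf (ratioSet v) else 1

open Classical in
/-- Maximal local uniformity: maximum ratio of consecutive distinct values;
`1` for a constant vector. -/
noncomputable def Lu {ι : Type} [Fintype ι] (v : ι → ℝ) : ℝ :=
  if (∃ a b : ι, v a ≠ v b) then sSup (ratioSet v) else 1

/-- Tensor (Kronecker) product of two vectors. -/
def tens {ι κ : Type} (x : ι → ℝ) (y : κ → ℝ) : ι × κ → ℝ :=
  fun p => x p.1 * y p.2

/-- `k`-fold tensor power of a vector. -/
def tpow {n : ℕ} (v : Fin n → ℝ) (k : ℕ) : (Fin k → Fin n) → ℝ :=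
  fun f => ∏ i, v (f i)

/-- A probability vector: nonnegative entries summing to one. -/
def IsProb {ι : Type} [Fintype ι] (v : ι → ℝ) : Prop :=
  (∀ i, 0 ≤ v i) ∧ ∑ i, v i = 1

/-- `v` sorted in non-increasing order. -/
noncomputable def sortDesc {n : ℕ} (v : Fin n → ℝ) : Fin n → ℝ :=
  fun i => v (Tuple.sort v i.rev)

/-- Shannon entropy (base 2), with the convention `0 log 0 = 0`. -/
noncomputable def entH {ι : Type} [Fintype ι] (v : ι → ℝ) : ℝ :=
  -∑ i, v i * Real.logb 2 (v i)

/-! Cut the top-`m` set of `ψ ⊗ χ` into columns `j` of sizes `mⱼ`: it is worth at most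
`∑ⱼ χⱼ e_{mⱼ}(ψ)`, while filling the same columns with top sets of `φ` shows
`∑ⱼ χⱼ e_{mⱼ}(φ) ≤ e_m(φ ⊗ χ)`. Strict majorization `ψ ◁ φ` makes this strict unless every
column is full or empty. Then `t` full columns are worth at most `e_t(χ)`. Fill instead the
columns of a top-`t` set of `χ`, and trade the entry `min φ · χₐ` of its weakest column `a` for
the entry `max φ · χ_b` of the strongest other column `b`: this gains, because `χ_b ≤ χₐ` are
adjacent values of `χ`, so `χ_b / χₐ ≥ l_u(χ) > g_u(φ)`. Hence `ψ ⊗ χ ◁ φ ⊗ χ` with a uniform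
gap `ε`. As `e_m` is invariant under permutations and `1`-Lipschitz for the `ℓ¹` distance,
replacing `χ` by `ω` changes `e_m(φ ⊗ ·)` by at most `‖ω^↓ - χ^↓‖₁ ≤ k ‖ω^↓ - χ^↓‖₂ < ε`. -/

section eSum

variable {ι : Type} [Fintype ι]

lemma finite_eSum_set (v : ι → ℝ) (m : ℕ) :
    {x | ∃ s : Finset ι, s.card = m ∧ x = ∑ i ∈ s, v i}.Finite :=
  (Set.finite_range fun s : Finset ι => ∑ i ∈ s, v i).subset <| by
    rintro x ⟨s, -, rfl⟩
    exact ⟨s, rfl⟩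

lemma sum_le_eSum (v : ι → ℝ) {s : Finset ι} {m : ℕ} (h : s.card = m) :
    ∑ i ∈ s, v i ≤ eSum v m :=
  le_csSup (finite_eSum_set v m).bddAbove ⟨s, h, rfl⟩

lemma exists_eSum_eq (v : ι → ℝ) {m : ℕ} (hm : m ≤ Fintype.card ι) :
    ∃ s : Finset ι, s.card = m ∧ eSum v m = ∑ i ∈ s, v i := by
  obtain ⟨t, -, ht⟩ := exists_subset_card_eq (s := (univ : Finset ι)) (by simpa using hm)
  have hne : {x | ∃ s : Finset ι, s.card = m ∧ x = ∑ i ∈ s, v i}.Nonempty := ⟨_, t, ht, rfl⟩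
  exact hne.csSup_mem (finite_eSum_set v m)

lemma eSum_zero (v : ι → ℝ) : eSum v 0 = 0 := by
  obtain ⟨s, hs, he⟩ := exists_eSum_eq v (Nat.zero_le _)
  rw [he, card_eq_zero.mp hs, sum_empty]

lemma eSum_card (v : ι → ℝ) : eSum v (Fintype.card ι) = ∑ i, v i := by
  obtain ⟨s, hs, he⟩ := exists_eSum_eq v le_rfl
  rw [he, eq_univ_of_card s hs]

lemma sum_sub_add_le_eSum (v : ι → ℝ) {s : Finset ι} {p q : ι} (hp : p ∈ s) (hq : q ∉ s) :
    ∑ i ∈ s, v i - v p + v q ≤ eSum v s.card := by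
  classical
  have hq' : q ∉ s.erase p := fun h => hq (mem_of_mem_erase h)
  calc ∑ i ∈ s, v i - v p + v q = ∑ i ∈ insert q (s.erase p), v i := by
        rw [sum_insert hq', sum_erase_eq_sub hp]
        ring
    _ ≤ eSum v s.card :=
        sum_le_eSum v (by rw [card_insert_of_notMem hq', card_erase_add_one hp])

lemma eSum_le_eSum_add_sum_abs_sub (v w : ι → ℝ) {m : ℕ} (hm : m ≤ Fintype.card ι) :
    eSum v m ≤ eSum w m + ∑ i, |v i - w i| := by
  obtain ⟨s, hs, he⟩ := exists_eSum_eq v hm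
  calc eSum v m = ∑ i ∈ s, w i + ∑ i ∈ s, (v i - w i) := by
        rw [he, ← sum_add_distrib]
        simp
    _ ≤ eSum w m + ∑ i, |v i - w i| :=
        add_le_add (sum_le_eSum w hs) <| (sum_le_sum fun i _ => le_abs_self _).trans <|
          sum_le_sum_of_subset_of_nonneg (subset_univ s) fun i _ _ => abs_nonneg _

lemma eSum_comp_equiv {κ : Type} [Fintype κ] (e : κ ≃ ι) (v : ι → ℝ) (m : ℕ) :
    eSum (v ∘ e) m = eSum v m := by
  unfold eSum
  congr 1
  ext x
  constructor
  · rintro ⟨s, rfl, rfl⟩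
    exact ⟨s.map e.toEmbedding, card_map _, by simp [sum_map]⟩
  · rintro ⟨s, rfl, rfl⟩
    exact ⟨s.map e.symm.toEmbedding, card_map _, by simp [sum_map]⟩

lemma SMaj.eSum_le {x y : ι → ℝ} (h : SMaj x y) {m : ℕ} (hm : m ≤ Fintype.card ι) :
    eSum x m ≤ eSum y m := by
  rcases Nat.eq_zero_or_pos m with rfl | hm0
  · rw [eSum_zero, eSum_zero]
  rcases hm.lt_or_eq with hlt | rfl
  · exact (h.1 m hm0 hlt).le
  · rw [eSum_card, eSum_card, h.2]

end eSum

section tens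

variable {ι κ : Type}

lemma sum_tens_product (x : ι → ℝ) (y : κ → ℝ) (s : Finset ι) (t : Finset κ) :
    ∑ p ∈ s ×ˢ t, tens x y p = (∑ i ∈ s, x i) * ∑ j ∈ t, y j := by
  rw [sum_product, sum_mul_sum]
  rfl

variable [Fintype ι] [Fintype κ]

lemma sum_tens (x : ι → ℝ) (y : κ → ℝ) : ∑ p, tens x y p = (∑ i, x i) * ∑ j, y j := by
  rw [← sum_tens_product, univ_product_univ]

def column [DecidableEq ι] [DecidableEq κ] (S : Finset (ι × κ)) (j : κ) : Finset ι :=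
  univ.filter fun i => (i, j) ∈ S

section column

variable [DecidableEq ι] [DecidableEq κ]

lemma sum_tens_eq_sum_column (x : ι → ℝ) (y : κ → ℝ) (S : Finset (ι × κ)) :
    ∑ p ∈ S, tens x y p = ∑ j, y j * ∑ i ∈ column S j, x i := by
  rw [← sum_ite_mem_eq, Fintype.sum_prod_type_right]
  simp [column, sum_filter, mul_sum, tens, mul_comm]

lemma card_eq_sum_card_column (S : Finset (ι × κ)) : S.card = ∑ j, (column S j).card := by
  rw [card_eq_sum_ones, ← sum_ite_mem_eq, Fintype.sum_prod_type_right]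
  simp [column]

end column

lemma exists_eSum_tens_le (ψ : ι → ℝ) {χ : κ → ℝ} (hχ : ∀ j, 0 ≤ χ j) {m : ℕ}
    (hm : m ≤ Fintype.card (ι × κ)) :
    ∃ m_ : κ → ℕ, (∀ j, m_ j ≤ Fintype.card ι) ∧ ∑ j, m_ j = m ∧
      eSum (tens ψ χ) m ≤ ∑ j, χ j * eSum ψ (m_ j) := by
  classical
  obtain ⟨S, rfl, hS⟩ := exists_eSum_eq (tens ψ χ) hm
  refine ⟨fun j => (column S j).card, fun j => card_le_univ _,
    (card_eq_sum_card_column S).symm, ?_⟩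
  rw [hS, sum_tens_eq_sum_column]
  exact sum_le_sum fun j _ => mul_le_mul_of_nonneg_left (sum_le_eSum ψ rfl) (hχ j)

lemma sum_mul_eSum_le_eSum_tens (φ : ι → ℝ) (χ : κ → ℝ) (m_ : κ → ℕ)
    (hm_ : ∀ j, m_ j ≤ Fintype.card ι) :
    ∑ j, χ j * eSum φ (m_ j) ≤ eSum (tens φ χ) (∑ j, m_ j) := by
  classical
  choose s hs he using fun j => exists_eSum_eq φ (hm_ j)
  set S : Finset (ι × κ) := univ.filter fun p => p.1 ∈ s p.2
  have hcol : ∀ j, column S j = s j := fun j => by ext; simp [S, column]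
  calc ∑ j, χ j * eSum φ (m_ j) = ∑ p ∈ S, tens φ χ p := by
        simp only [sum_tens_eq_sum_column, hcol, he]
    _ ≤ _ := sum_le_eSum _ (by simp only [card_eq_sum_card_column, hcol, hs])

end tens

section uniformity

variable {ι : Type} [Fintype ι]

lemma ratioSet_bddBelow {v : ι → ℝ} (hv : ∀ i, 0 < v i) : BddBelow (ratioSet v) :=
  ⟨0, by rintro r ⟨a, b, -, -, rfl⟩; exact div_nonneg (hv b).le (hv a).le⟩

lemma exists_adjacent_lt {v : ι → ℝ} {a b : ι} (h : v b < v a) :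
    ∃ c, v c < v a ∧ ¬ ∃ d, v c < v d ∧ v d < v a := by
  classical
  obtain ⟨c, hc, hmax⟩ := exists_max_image (univ.filter fun i => v i < v a) v ⟨b, by simpa⟩
  rw [mem_filter] at hc
  exact ⟨c, hc.2, fun ⟨d, hcd, hda⟩ => (hmax d (by simpa using hda)).not_gt hcd⟩

lemma lu_le_one {v : ι → ℝ} (hv : ∀ i, 0 < v i) : lu v ≤ 1 := by
  unfold lu
  split_ifs with hex
  · obtain ⟨a, b, hba⟩ : ∃ a b, v b < v a := by
      obtain ⟨a, b, hab⟩ := hex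
      rcases hab.lt_or_gt with h | h
      exacts [⟨b, a, h⟩, ⟨a, b, h⟩]
    obtain ⟨c, hca, hgap⟩ := exists_adjacent_lt hba
    exact csInf_le_of_le (ratioSet_bddBelow hv) ⟨a, c, hca, hgap, rfl⟩
      ((div_le_one (hv a)).2 hca.le)
  · exact le_rfl

lemma lu_le_div {v : ι → ℝ} (hv : ∀ i, 0 < v i) {a b : ι} (hba : v b ≤ v a)
    (hgap : ¬ ∃ c, v b < v c ∧ v c < v a) : lu v ≤ v b / v a := by
  rcases hba.lt_or_eq with hlt | heq
  · rw [lu, if_pos ⟨a, b, hlt.ne'⟩]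
    exact csInf_le (ratioSet_bddBelow hv) ⟨a, b, hlt, hgap, rfl⟩
  · rw [heq, div_self (hv a).ne']
    exact lu_le_one hv

lemma sInf_mul_lt_sSup_mul_of_gu_lt {φ : ι → ℝ} (hφ : IsProb φ) {s t : ℝ} (ht : 0 < t)
    (h : gu φ < s / t) : sInf (Set.range φ) * t < sSup (Set.range φ) * s := by
  obtain ⟨i, -, hi⟩ := exists_lt_of_sum_lt (s := univ) (f := 0) (g := φ) (by simp [hφ.2])
  have hM : 0 < sSup (Set.range φ) := hi.trans_le (le_csSup (Set.finite_range φ).bddAbove ⟨i, rfl⟩)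
  rw [gu, div_lt_div_iff₀ hM ht] at h
  linarith

end uniformity

section strict

variable {ι κ : Type} [Fintype ι] [Fintype κ]

lemma exists_eSum_eq_sum_adjacent (v : κ → ℝ) {t : ℕ} (ht0 : 0 < t)
    (ht : t < Fintype.card κ) :
    ∃ F : Finset κ, F.card = t ∧ eSum v t = ∑ j ∈ F, v j ∧
      ∃ a ∈ F, ∃ b ∉ F, v b ≤ v a ∧ ¬ ∃ c, v b < v c ∧ v c < v a := by
  classical
  obtain ⟨F, hF, he⟩ := exists_eSum_eq v ht.le
  obtain ⟨a, ha, hamin⟩ := exists_min_image F v (card_pos.1 (hF ▸ ht0))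
  obtain ⟨b, hb, hbmax⟩ := exists_max_image Fᶜ v (by rw [← card_pos, card_compl, hF]; omega)
  rw [mem_compl] at hb
  refine ⟨F, hF, he, a, ha, b, hb, ?_, fun ⟨c, hbc, hca⟩ => ?_⟩
  · have := sum_sub_add_le_eSum v ha hb
    rw [hF, he] at this
    linarith
  · by_cases hc : c ∈ F
    · exact (hamin c hc).not_gt hca
    · exact (hbmax c (mem_compl.2 hc)).not_gt hbc

lemma eSum_lt_eSum_tens_card_mul {φ : ι → ℝ} (hφ : IsProb φ) {χ : κ → ℝ} (hχ : ∀ j, 0 < χ j)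
    (h : gu φ < lu χ) {t : ℕ} (ht0 : 0 < t) (ht : t < Fintype.card κ) :
    eSum χ t < eSum (tens φ χ) (Fintype.card ι * t) := by
  obtain ⟨F, hF, he, a, ha, b, hb, hba, hgap⟩ := exists_eSum_eq_sum_adjacent χ ht0 ht
  obtain ⟨i₀⟩ := nonempty_of_sum_ne_zero (hφ.2.symm ▸ one_ne_zero)
  have : Nonempty ι := ⟨i₀⟩
  obtain ⟨imin, himin⟩ := (Set.range_nonempty φ).csInf_mem (Set.finite_range φ)
  obtain ⟨imax, himax⟩ := (Set.range_nonempty φ).csSup_mem (Set.finite_range φ)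
  have hgain := sInf_mul_lt_sSup_mul_of_gu_lt hφ (hχ a) (h.trans_le (lu_le_div hχ hba hgap))
  rw [← himin, ← himax] at hgain
  have hswap := sum_sub_add_le_eSum (tens φ χ) (s := univ ×ˢ F) (p := (imin, a)) (q := (imax, b))
    (mem_product.2 ⟨mem_univ _, ha⟩) (by simp [hb])
  rw [sum_tens_product, card_product, card_univ, hF, hφ.2, one_mul] at hswap
  simp only [tens] at hswap
  linarith

theorem SMaj.tens {ψ φ : ι → ℝ} (hsm : SMaj ψ φ) (hφ : IsProb φ) {χ : κ → ℝ}
    (hχ : ∀ j, 0 < χ j) (h : gu φ < lu χ) : SMaj (tens ψ χ) (tens φ χ) := by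
  refine ⟨fun m hm0 hm => ?_, by rw [sum_tens, sum_tens, hsm.2]⟩
  obtain ⟨m_, hm_, rfl, hub⟩ := exists_eSum_tens_le ψ (fun j => (hχ j).le) hm.le
  refine hub.trans_lt ?_
  by_cases hpartial : ∃ j, 0 < m_ j ∧ m_ j < Fintype.card ι
  · obtain ⟨j, hj0, hjn⟩ := hpartial
    refine (sum_mul_eSum_le_eSum_tens φ χ m_ hm_).trans_lt' <| sum_lt_sum
      (fun j _ => mul_le_mul_of_nonneg_left (hsm.eSum_le (hm_ j)) (hχ j).le)
      ⟨j, mem_univ j, mul_lt_mul_of_pos_left (hsm.1 _ hj0 hjn) (hχ j)⟩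
  · classical
    set F := univ.filter fun j => m_ j = Fintype.card ι
    have hm_F : ∀ j, m_ j = if j ∈ F then Fintype.card ι else 0 := by
      intro j
      push Not at hpartial
      have := hpartial j
      have := hm_ j
      split_ifs with hj <;> simp [F] at hj <;> omega
    have hsum : ∑ j, m_ j = Fintype.card ι * F.card := by
      simp [hm_F, sum_ite_mem, mul_comm]
    rw [hsum] at hm0 hm ⊢
    rw [Fintype.card_prod] at hm
    calc ∑ j, χ j * eSum ψ (m_ j) = ∑ j ∈ F, χ j := by
          simp [hm_F, apply_ite, eSum_zero, eSum_card, hsm.2, hφ.2]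
      _ ≤ eSum χ F.card := sum_le_eSum χ rfl
      _ < _ := eSum_lt_eSum_tens_card_mul hφ hχ h (Nat.pos_of_mul_pos_left hm0)
          (Nat.lt_of_mul_lt_mul_left hm)

end strict

section perturbation

variable {ι : Type} [Fintype ι]

lemma eSum_tens_sortDesc {n : ℕ} (φ : ι → ℝ) (v : Fin n → ℝ) (m : ℕ) :
    eSum (tens φ (sortDesc v)) m = eSum (tens φ v) m := by
  have : tens φ (sortDesc v) =
      tens φ v ∘ Equiv.prodCongr (Equiv.refl ι) (Fin.revPerm.trans (Tuple.sort v)) := by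
    funext p
    simp [tens, sortDesc]
  rw [this, eSum_comp_equiv]

lemma eSum_tens_le_eSum_tens_add {n : ℕ} {φ : ι → ℝ} (hφ : IsProb φ) (χ ω : Fin n → ℝ)
    {m : ℕ} (hm : m ≤ Fintype.card (ι × Fin n)) :
    eSum (tens φ χ) m ≤ eSum (tens φ ω) m + ∑ j, |sortDesc ω j - sortDesc χ j| := by
  rw [← eSum_tens_sortDesc φ χ, ← eSum_tens_sortDesc φ ω]
  have hterm : ∀ p : ι × Fin n, |tens φ (sortDesc χ) p - tens φ (sortDesc ω) p| =
      tens φ (fun j => |sortDesc ω j - sortDesc χ j|) p := fun p => by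
    simp only [tens, ← mul_sub, abs_mul, abs_of_nonneg (hφ.1 p.1), abs_sub_comm]
  refine (eSum_le_eSum_add_sum_abs_sub _ (tens φ (sortDesc ω)) hm).trans_eq ?_
  rw [sum_congr rfl fun p _ => hterm p, sum_tens, hφ.2, one_mul]

lemma sum_abs_le_card_mul_sqrt_sum_sq (x : ι → ℝ) :
    ∑ i, |x i| ≤ Fintype.card ι * √(∑ i, x i ^ 2) :=
  calc ∑ i, |x i| ≤ ∑ _i : ι, √(∑ i, x i ^ 2) := sum_le_sum fun i _ =>
        Real.abs_le_sqrt (single_le_sum (fun j _ => sq_nonneg (x j)) (mem_univ i))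
    _ = Fintype.card ι * √(∑ i, x i ^ 2) := by simp

end perturbation

lemma Finset.exists_pos_forall_add_le {α : Type*} (s : Finset α) {f g : α → ℝ}
    (h : ∀ a ∈ s, f a < g a) : ∃ ε > 0, ∀ a ∈ s, f a + ε ≤ g a := by
  have : ∀ᶠ ε in nhdsWithin (0 : ℝ) (Set.Ioi 0), ∀ a ∈ s, f a + ε ≤ g a :=
    (Filter.eventually_all_finset s).2 fun a ha =>
      ((eventually_le_nhds (sub_pos.2 (h a ha))).filter_mono nhdsWithin_le_nhds).mono
        fun ε hε => by linarith
  obtain ⟨ε, hε, hpos⟩ := (this.and self_mem_nhdsWithin).exists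
  exact ⟨ε, hpos, hε⟩

theorem exists_delta_majorization_perturbation_general {n k : ℕ}
    (ψ φ : Fin n → ℝ) (hφ : IsProb φ) (hsm : SMaj ψ φ)
    (χ : Fin k → ℝ) (hχprob : IsProb χ) (hχpos : ∀ i, 0 < χ i)
    (h : gu φ < lu χ) :
    ∃ δ > 0, ∀ ω : Fin k → ℝ, IsProb ω →
      Real.sqrt (∑ i, (sortDesc ω i - sortDesc χ i) ^ 2) < δ →
      Maj (tens ψ χ) (tens φ ω) := by
  obtain ⟨hlt, hsum⟩ := hsm.tens hφ hχpos h
  obtain ⟨ε, hε, hgap⟩ := (Ico 1 (Fintype.card (Fin n × Fin k))).exists_pos_forall_add_le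
    fun m hm => hlt m (mem_Ico.1 hm).1 (mem_Ico.1 hm).2
  refine ⟨ε / (k + 1), by positivity, fun ω hω hclose => ⟨fun m hm0 hm => ?_, ?_⟩⟩
  · have hpert := eSum_tens_le_eSum_tens_add hφ χ ω hm.le
    have hdist := sum_abs_le_card_mul_sqrt_sum_sq fun j => sortDesc ω j - sortDesc χ j
    have hδ := (lt_div_iff₀' (by positivity)).1 hclose
    have hgap_m := hgap m (mem_Ico.2 ⟨hm0, hm⟩)
    rw [Fintype.card_fin] at hdist
    linarith [Real.sqrt_nonneg (∑ i, (sortDesc ω i - sortDesc χ i) ^ 2)]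
  · rw [hsum, sum_tens, sum_tens, hχprob.2, hω.2]

/-- robustness of the tensor majorization under small
perturbations of the auxiliary state. -/
theorem exists_delta_majorization_perturbation {n k : ℕ}
    (ψ φ : Fin n → ℝ) (hψ : IsProb ψ) (hφ : IsProb φ) (hsm : SMaj ψ φ)
    (χ : Fin k → ℝ) (hχprob : IsProb χ) (hχpos : ∀ i, 0 < χ i)
    (h : gu φ < lu χ) :
    ∃ δ > 0, ∀ ω : Fin k → ℝ, IsProb ω →
      Real.sqrt (∑ i, (sortDesc ω i - sortDesc χ i) ^ 2) < δ →
      Maj (tens ψ χ) (tens φ ω) :=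
  exists_delta_majorization_perturbation_general ψ φ hφ hsm χ hχprob hχpos h
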